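/- Let T ⊆ ℝⁿ be nonempty, let ν be a point of minimal ℓ0-norm in T, and let x', x* ∈ T, λ', λ* ∈ ℝ≥0ⁿ satisfy: (a) |x'ᵢ|·λ'ᵢ = 0 and |x'ᵢ| + λ'ᵢ > 0 for all i with ‖x'‖₀ = ‖ν‖₀; (b) |x*ᵢ|·λ*ᵢ = 0 for all i; (c) ‖λ'‖₀ ≤ ‖λ*‖₀. Then ‖x*‖₀ = ‖ν‖₀, i.e., x* is also a sparsest point of T. -/

import Mathlib

/-! Complementarity of `x` and `λ` means their supports are disjoint, so `‖x‖₀ ≤ n - ‖λ‖₀`, with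
equality under strict complementarity. Hence
`‖x*‖₀ ≤ n - ‖λ*‖₀ ≤ n - ‖λ'‖₀ = ‖x'‖₀ = ‖ν‖₀`, and the reverse inequality is the sparsity of `ν`. -/

open Finset

section Support

variable {ι α β : Type*} [Fintype ι] [Zero α] [Zero β] [DecidableEq α] [DecidableEq β]
  (x : ι → α) (y : ι → β)

lemma card_support_add_card_support_le (h : ∀ i, x i = 0 ∨ y i = 0) :
    #{i | x i ≠ 0} + #{i | y i ≠ 0} ≤ Fintype.card ι := by
  have hsub : ({i | y i ≠ 0} : Finset ι) ⊆ ({i | ¬x i ≠ 0} : Finset ι) :=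
    monotone_filter_right _ fun i _ hy => not_not.mpr ((h i).resolve_right hy)
  calc #{i | x i ≠ 0} + #{i | y i ≠ 0} ≤ #{i | x i ≠ 0} + #{i | ¬x i ≠ 0} := by gcongr
    _ = Fintype.card ι := card_filter_add_card_filter_not _

lemma card_support_add_card_support_eq (h : ∀ i, x i = 0 ↔ y i ≠ 0) :
    #{i | x i ≠ 0} + #{i | y i ≠ 0} = Fintype.card ι := by
  have hy : ({i | y i ≠ 0} : Finset ι) = ({i | ¬x i ≠ 0} : Finset ι) :=
    filter_congr fun i _ => by rw [not_not, h]
  rw [hy]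
  exact card_filter_add_card_filter_not _

end Support

theorem stmt_16_general (n : ℕ) (T : Set (Fin n → ℝ))
    (ν : Fin n → ℝ)
    (hsparse : ∀ x ∈ T, (Finset.univ.filter (fun i => ν i ≠ 0)).card
      ≤ (Finset.univ.filter (fun i => x i ≠ 0)).card)
    (x' xs lam' lams : Fin n → ℝ)
    (hxs : xs ∈ T)
    (ha1 : ∀ i, |x' i| * lam' i = 0)
    (ha2 : ∀ i, 0 < |x' i| + lam' i)
    (ha3 : (Finset.univ.filter (fun i => x' i ≠ 0)).card
      = (Finset.univ.filter (fun i => ν i ≠ 0)).card)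
    (hb : ∀ i, |xs i| * lams i = 0)
    (hc : (Finset.univ.filter (fun i => lam' i ≠ 0)).card
      ≤ (Finset.univ.filter (fun i => lams i ≠ 0)).card) :
    (Finset.univ.filter (fun i => xs i ≠ 0)).card
      = (Finset.univ.filter (fun i => ν i ≠ 0)).card := by
  have hstrict : ∀ i, x' i = 0 ↔ lam' i ≠ 0 := fun i => by
    constructor
    · intro hx hlam
      simpa [hx, hlam] using ha2 i
    · intro hlam
      simpa [hlam] using ha1 i
  have hcompl : ∀ i, xs i = 0 ∨ lams i = 0 := fun i => by simpa using hb i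
  have hx' := card_support_add_card_support_eq x' lam' hstrict
  have hxs' := card_support_add_card_support_le xs lams hcompl
  have hν := hsparse xs hxs
  simp only [Fintype.card_fin] at hx' hxs'
  omega

theorem stmt_16 (n : ℕ) (T : Set (Fin n → ℝ)) (hT : T.Nonempty)
    (ν : Fin n → ℝ) (hν : ν ∈ T)
    (hsparse : ∀ x ∈ T, (Finset.univ.filter (fun i => ν i ≠ 0)).card
      ≤ (Finset.univ.filter (fun i => x i ≠ 0)).card)
    (x' xs lam' lams : Fin n → ℝ)
    (hx' : x' ∈ T) (hxs : xs ∈ T)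
    (hlam' : ∀ i, 0 ≤ lam' i) (hlams : ∀ i, 0 ≤ lams i)
    (ha1 : ∀ i, |x' i| * lam' i = 0)
    (ha2 : ∀ i, 0 < |x' i| + lam' i)
    (ha3 : (Finset.univ.filter (fun i => x' i ≠ 0)).card
      = (Finset.univ.filter (fun i => ν i ≠ 0)).card)
    (hb : ∀ i, |xs i| * lams i = 0)
    (hc : (Finset.univ.filter (fun i => lam' i ≠ 0)).card
      ≤ (Finset.univ.filter (fun i => lams i ≠ 0)).card) :
    (Finset.univ.filter (fun i => xs i ≠ 0)).card
      = (Finset.univ.filter (fun i => ν i ≠ 0)).card :=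
  stmt_16_general n T ν hsparse x' xs lam' lams hxs ha1 ha2 ha3 hb hc
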